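/- An R-module M is strongly PGF if and only if there exists a short exact sequence 0 → M → P → M → 0 with P projective and Tor₁^R(I, M) = 0 for every injective module I. -/

import Mathlib

open CategoryTheory

universe u

variable (R : Type u) [CommRing R]

/-- `M` is projectively coresolved Gorenstein flat (PGF). -/
def IsPGF (M : ModuleCat.{u} R) : Prop :=
  ∃ (P : ℤ → ModuleCat.{u} R) (d : (i : ℤ) → P (i + 1) →ₗ[R] P i),
    (∀ i, Module.Projective R (P i)) ∧
    (∀ i, Function.Exact (d (i + 1)) (d i)) ∧
    Nonempty (LinearMap.range (d 0) ≃ₗ[R] M) ∧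
    ∀ (I : ModuleCat.{u} R), Module.Injective R I →
      ∀ i, Function.Exact ((d (i + 1)).lTensor I) ((d i).lTensor I)

/-- The Tor groups `Tor_i(A, B)` as modules. -/
noncomputable def torM (i : ℕ) (A B : ModuleCat.{u} R) : ModuleCat.{u} R :=
  ((Tor (ModuleCat.{u} R) i).obj A).obj B

/-- `pdLE R n M` means that `M` has projective dimension at most `n`. -/
def pdLE : ℕ → ModuleCat.{u} R → Prop
  | 0, M => Module.Projective R M
  | n + 1, M =>
    ∃ (P : ModuleCat.{u} R) (f : P →ₗ[R] M), Module.Projective R P ∧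
      Function.Surjective f ∧ pdLE n (ModuleCat.of R (LinearMap.ker f))

/-- `pdEq R n M` means that `M` has projective dimension exactly `n`. -/
def pdEq (n : ℕ) (M : ModuleCat.{u} R) : Prop :=
  pdLE R n M ∧ ∀ m : ℕ, pdLE R m M → n ≤ m

/-- `idLE R n M` means that `M` has injective dimension at most `n`. -/
def idLE : ℕ → ModuleCat.{u} R → Prop
  | 0, M => Module.Injective R M
  | n + 1, M =>
    ∃ (I : ModuleCat.{u} R) (f : M →ₗ[R] I), Module.Injective R I ∧
      Function.Injective f ∧ idLE n (ModuleCat.of R (I ⧸ LinearMap.range f))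

/-- `pgfdimLE R n M` means that `M` has a resolution of length `n` by PGF modules. -/
def pgfdimLE : ℕ → ModuleCat.{u} R → Prop
  | 0, M => IsPGF R M
  | n + 1, M =>
    ∃ (G : ModuleCat.{u} R) (f : G →ₗ[R] M), IsPGF R G ∧
      Function.Surjective f ∧ pgfdimLE n (ModuleCat.of R (LinearMap.ker f))

/-- `M` has PGF-dimension exactly `n`. -/
def pgfdimEq (n : ℕ) (M : ModuleCat.{u} R) : Prop :=
  pgfdimLE R n M ∧ ∀ m : ℕ, pgfdimLE R m M → n ≤ m

/-- `M` is a strongly PGF module. -/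
def IsStronglyPGF (M : ModuleCat.{u} R) : Prop :=
  ∃ (P : ModuleCat.{u} R) (f : M →ₗ[R] P) (g : P →ₗ[R] M),
    Module.Projective R P ∧
    Function.Injective f ∧ Function.Exact f g ∧ Function.Surjective g ∧
    ∀ (I : ModuleCat.{u} R), Module.Injective R I →
      Function.Injective (f.lTensor I) ∧ Function.Exact (f.lTensor I) (g.lTensor I)

/-- `M` is a strongly `n`-PGF module. -/
def IsStronglyNPGF (n : ℕ) (M : ModuleCat.{u} R) : Prop :=
  ∃ (F : ModuleCat.{u} R) (f : M →ₗ[R] F) (g : F →ₗ[R] M),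
    Function.Injective f ∧ Function.Exact f g ∧ Function.Surjective g ∧
    pdLE R n F ∧
    ∀ (I : ModuleCat.{u} R), Module.Injective R I →
      Subsingleton (torM R (n + 1) I M)

/-- `M` is a direct summand of `N`. -/
def IsDirectSummand (M N : ModuleCat.{u} R) : Prop :=
  ∃ (i : M →ₗ[R] N) (p : N →ₗ[R] M), p ∘ₗ i = LinearMap.id

/-!
Splicing `0 → M → P → M → 0` with itself gives the projective resolution `⋯ → P → P → P → M`
all of whose differentials are `f ∘ g`, so `Tor₁(I, M)` is the homology of
`I ⊗ P → I ⊗ P → I ⊗ P` with both maps `I ⊗ (f ∘ g)`. As `I ⊗ M → I ⊗ P → I ⊗ M → 0` stays exact,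
this homology vanishes exactly when `I ⊗ f` is injective.
-/

lemma Function.Exact.exact_comp_self_iff_injective {A M N : Type*} [Ring A]
    [AddCommGroup M] [Module A M] [AddCommGroup N] [Module A N]
    {f : M →ₗ[A] N} {g : N →ₗ[A] M} (hfg : Function.Exact f g) (hg : Function.Surjective g) :
    Function.Exact (f ∘ₗ g) (f ∘ₗ g) ↔ Function.Injective f := by
  rw [hg.comp_exact_iff_exact]
  refine ⟨fun h => (injective_iff_map_eq_zero f).mpr fun x hx => ?_,
    fun hf => hf.comp_exact_iff_exact.mpr hfg⟩
  obtain ⟨y, rfl⟩ := hg x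
  exact (hfg y).mpr ((h y).mp hx)

lemma ChainComplex.moduleCat_exactAt_succ_iff {A : Type*} [Ring A]
    (K : ChainComplex (ModuleCat A) ℕ) (n : ℕ) :
    K.ExactAt (n + 1) ↔ Function.Exact (K.d (n + 2) (n + 1)) (K.d (n + 1) n) := by
  rw [HomologicalComplex.exactAt_iff' _ (n + 2) (n + 1) n (by simp) (by simp),
    ShortComplex.ShortExact.moduleCat_exact_iff_function_exact]
  rfl

section Periodic

variable {C : Type*} [Category C] [Limits.HasZeroMorphisms C] {X : C}

def ChainComplex.periodic (e : X ⟶ X) (he : e ≫ e = 0) : ChainComplex C ℕ :=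
  ChainComplex.of (fun _ => X) (fun _ => e) (fun _ => he)

@[simp]
lemma ChainComplex.periodic_d_succ (e : X ⟶ X) (he : e ≫ e = 0) (n : ℕ) :
    (ChainComplex.periodic e he).d (n + 1) n = e := by
  simp [ChainComplex.periodic]

end Periodic

section PeriodicResolution

variable {A : Type u} [Ring A] {M P : ModuleCat.{u} A} {f : M →ₗ[A] P} {g : P →ₗ[A] M}

noncomputable def CategoryTheory.ProjectiveResolution.periodic (hP : Module.Projective A P)
    (hf : Function.Injective f) (hfg : Function.Exact f g) (hg : Function.Surjective g) :
    ProjectiveResolution M where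
  -- With `X := P` the terms are `P`, not `ModuleCat.of A ↑P`, which keeps `π` cheap to elaborate.
  complex := ChainComplex.periodic (X := P) (ModuleCat.ofHom (f ∘ₗ g))
    (by ext x; simp [hfg.apply_apply_eq_zero])
  projective _ := (IsProjective.iff_projective P).mp hP
  π := (ChainComplex.toSingle₀Equiv _ _).symm ⟨(ModuleCat.ofHom g : P ⟶ M), by
    ext x; exact hfg.apply_apply_eq_zero (g x)⟩
  quasiIso := ⟨fun n => by
    cases n with
    | zero =>
      rw [ChainComplex.quasiIsoAt₀_iff, ShortComplex.quasiIso_iff_of_zeros']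
      · constructor
        · rw [ShortComplex.moduleCat_exact_iff]
          exact fun x hx => (hg.comp_exact_iff_exact.mpr hfg x).mp hx
        · rw [ModuleCat.epi_iff_surjective]
          exact hg
      all_goals rfl
    | succ n =>
      rw [quasiIsoAt_iff_exactAt' _ _ (ChainComplex.exactAt_succ_single_obj _ _),
        ChainComplex.moduleCat_exactAt_succ_iff, ChainComplex.periodic_d_succ,
        ChainComplex.periodic_d_succ]
      exact (hfg.exact_comp_self_iff_injective hg).mpr hf⟩

end PeriodicResolution

open MonoidalCategory in
variable {R} in
lemma subsingleton_torM_one_iff_injective_lTensor {M P : ModuleCat.{u} R}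
    {f : M →ₗ[R] P} {g : P →ₗ[R] M} (hP : Module.Projective R P) (hf : Function.Injective f)
    (hfg : Function.Exact f g) (hg : Function.Surjective g) (I : ModuleCat.{u} R) :
    Subsingleton (torM R 1 I M) ↔ Function.Injective (f.lTensor I) := by
  let F := (tensoringLeft (ModuleCat.{u} R)).obj I
  let res := ProjectiveResolution.periodic hP hf hfg hg
  let K := (F.mapHomologicalComplex _).obj res.complex
  calc Subsingleton (torM R 1 I M)
      ↔ Limits.IsZero ((F.leftDerived 1).obj M) := ModuleCat.isZero_iff_subsingleton.symm
    _ ↔ K.ExactAt 1 :=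
        (res.isoLeftDerivedObj F 1).isZero_iff.trans (K.exactAt_iff_isZero_homology 1).symm
    _ ↔ Function.Exact ((f ∘ₗ g).lTensor I) ((f ∘ₗ g).lTensor I) :=
        ChainComplex.moduleCat_exactAt_succ_iff K 0
    _ ↔ Function.Injective (f.lTensor I) := by
      rw [LinearMap.lTensor_comp]
      exact (lTensor_exact I hfg hg).exact_comp_self_iff_injective
        (LinearMap.lTensor_surjective I hg)

theorem stmt6 (M : ModuleCat.{u} R) :
    IsStronglyPGF R M ↔
      ∃ (P : ModuleCat.{u} R) (f : M →ₗ[R] P) (g : P →ₗ[R] M),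
        Module.Projective R P ∧ Function.Injective f ∧ Function.Exact f g ∧
        Function.Surjective g ∧
        ∀ (I : ModuleCat.{u} R), Module.Injective R I → Subsingleton (torM R 1 I M) := by
  refine exists_congr fun P => exists_congr fun f => exists_congr fun g => ?_
  constructor
  · rintro ⟨hP, hf, hfg, hg, hI⟩
    exact ⟨hP, hf, hfg, hg, fun I hInj =>
      (subsingleton_torM_one_iff_injective_lTensor hP hf hfg hg I).mpr (hI I hInj).1⟩
  · rintro ⟨hP, hf, hfg, hg, hI⟩
    exact ⟨hP, hf, hfg, hg, fun I hInj =>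
      ⟨(subsingleton_torM_one_iff_injective_lTensor hP hf hfg hg I).mp (hI I hInj),
        lTensor_exact I hfg hg⟩⟩
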